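/- Let q be a prime power, let d be an even positive integer with k ≥ d, and let n1 > k, n2 > k, n = n1 + n2. Let 𝒰1 ⊆ F_q^{k×n1} and 𝒰2 ⊆ F_q^{k×n2} be SC-representation sets of cardinalities N1 and N2 respectively, each with pairwise subspace distance (between row spaces) at least d. Let 𝒞_R ⊆ F_q^{k×n2} be a linear rank-metric code with N_R elements whose every nonzero codeword has rank at least d/2. Let C3 be a set of k-dimensional subspaces of F_q^n with pairwise subspace distance at least d such that for every Y ∈ C3 the projection of Y onto the first n1 coordinates has dimension at least d/2 and at most k − d/2. Set C1 = { im(U|M) : U ∈ 𝒰1, M ∈ 𝒞_R } and C2 = { im(0_{k×n1}|U) : U ∈ 𝒰2 }, where 0_{k×n1} is the k×n1 zero matrix. Then C = C1 ∪ C2 ∪ C3 is a set of exactly N1·N_R + N2 + |C3| distinct k-dimensional subspaces of F_q^n whose pairwise subspace distance is at least d. -/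
import Mathlib

/-- The subspace distance `d_S(U,W) = 2·dim(U+W) − dim U − dim W` between two
subspaces of an `F`-vector space. -/
noncomputable def subspaceDist {F V : Type*} [Field F] [AddCommGroup V] [Module F V]
    (U W : Submodule F V) : ℕ :=
  2 * Module.finrank F ↥(U ⊔ W) - Module.finrank F ↥U - Module.finrank F ↥W

/-- The row space `im(A)` of a matrix `A`, i.e. the span of its rows. -/
def rowSpace {F : Type*} [Field F] {k n : ℕ} (A : Matrix (Fin k) (Fin n) F) :
    Submodule F (Fin n → F) :=
  Submodule.span F (Set.range fun i : Fin k => A i)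

/-- Horizontal concatenation `(U | M)` of two matrices with the same number of rows. -/
def hcat {F : Type*} [Field F] {k n1 n2 : ℕ} (U : Matrix (Fin k) (Fin n1) F)
    (M : Matrix (Fin k) (Fin n2) F) : Matrix (Fin k) (Fin (n1 + n2)) F :=
  Matrix.of fun i => Fin.append (U i) (M i)

/-- The projection of `F^(n1+n2)` onto the first `n1` coordinates. -/
noncomputable def proj1 (F : Type*) [Field F] (n1 n2 : ℕ) :
    (Fin (n1 + n2) → F) →ₗ[F] (Fin n1 → F) :=
  LinearMap.funLeft F F (Fin.castAdd n2)

noncomputable def proj2 (F : Type*) [Field F] (n1 n2 : ℕ) :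
    (Fin (n1 + n2) → F) →ₗ[F] (Fin n2 → F) :=
  LinearMap.funLeft F F (Fin.natAdd n1)

section Helpers

variable {F : Type*} [Field F] {k n1 n2 : ℕ}

lemma hcat_apply (U : Matrix (Fin k) (Fin n1) F) (M : Matrix (Fin k) (Fin n2) F) (i : Fin k) :
    hcat U M i = Fin.append (U i) (M i) := rfl

lemma finrank_rowSpace {n : ℕ} (A : Matrix (Fin k) (Fin n) F) :
    Module.finrank F ↥(rowSpace A) = A.rank :=
  (Matrix.rank_eq_finrank_span_row A).symm

lemma proj1_append (a : Fin n1 → F) (b : Fin n2 → F) :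
    proj1 F n1 n2 (Fin.append a b) = a :=
  funext fun i => Fin.append_left a b i

lemma proj2_append (a : Fin n1 → F) (b : Fin n2 → F) :
    proj2 F n1 n2 (Fin.append a b) = b :=
  funext fun i => Fin.append_right a b i

lemma map_rowSpace {n m : ℕ} (g : (Fin n → F) →ₗ[F] (Fin m → F))
    (A : Matrix (Fin k) (Fin n) F) :
    (rowSpace A).map g = Submodule.span F (Set.range fun i : Fin k => g (A i)) := by
  rw [rowSpace, Submodule.map_span, ← Set.range_comp]
  rfl

lemma map_proj1_hcat (U : Matrix (Fin k) (Fin n1) F) (M : Matrix (Fin k) (Fin n2) F) :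
    (rowSpace (hcat U M)).map (proj1 F n1 n2) = rowSpace U := by
  rw [map_rowSpace]
  simp only [hcat_apply, proj1_append]
  rfl

lemma map_proj2_hcat (U : Matrix (Fin k) (Fin n1) F) (M : Matrix (Fin k) (Fin n2) F) :
    (rowSpace (hcat U M)).map (proj2 F n1 n2) = rowSpace M := by
  rw [map_rowSpace]
  simp only [hcat_apply, proj2_append]
  rfl

lemma rowSpace_zero {n : ℕ} : rowSpace (0 : Matrix (Fin k) (Fin n) F) = ⊥ := by
  rw [rowSpace, Submodule.span_eq_bot]
  rintro x ⟨i, rfl⟩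
  rfl

lemma append_sub (a c : Fin n1 → F) (b d : Fin n2 → F) :
    Fin.append a b - Fin.append c d = Fin.append (a - c) (b - d) := by
  funext j
  refine Fin.addCases (fun i => ?_) (fun i => ?_) j <;>
    simp [Fin.append_left, Fin.append_right]

lemma eq_zero_of_projs {x : Fin (n1 + n2) → F} (h1 : proj1 F n1 n2 x = 0)
    (h2 : proj2 F n1 n2 x = 0) : x = 0 := by
  funext j
  refine Fin.addCases (fun i => ?_) (fun i => ?_) j
  · exact congrFun h1 i
  · exact congrFun h2 i

lemma finrank_decomp {V W : Type*} [AddCommGroup V] [Module F V] [AddCommGroup W]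
    [Module F W] [FiniteDimensional F V] (f : V →ₗ[F] W) (p : Submodule F V) :
    Module.finrank F ↥p =
      Module.finrank F ↥(p.map f) + Module.finrank F ↥(LinearMap.ker f ⊓ p) := by
  have h := LinearMap.finrank_range_add_finrank_ker (f.comp p.subtype)
  rw [LinearMap.range_comp, Submodule.range_subtype] at h
  have hker : LinearMap.ker (f.comp p.subtype) =
      Submodule.comap p.subtype (LinearMap.ker f ⊓ p) := by
    rw [LinearMap.ker_comp, Submodule.comap_inf, Submodule.comap_subtype_self, inf_top_eq]
  have e2 := (Submodule.comapSubtypeEquivOfLe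
    (inf_le_right : LinearMap.ker f ⊓ p ≤ p)).finrank_eq
  rw [hker, e2] at h
  omega

lemma hcat_zero_le_ker (M : Matrix (Fin k) (Fin n2) F) :
    rowSpace (hcat (0 : Matrix (Fin k) (Fin n1) F) M) ≤ LinearMap.ker (proj1 F n1 n2) := by
  rw [rowSpace, Submodule.span_le]
  rintro x ⟨i, rfl⟩
  simp only [SetLike.mem_coe, LinearMap.mem_ker, hcat_apply]
  exact proj1_append _ _

lemma rank_hcat_le (U : Matrix (Fin k) (Fin n1) F) (M : Matrix (Fin k) (Fin n2) F) :
    (hcat U M).rank ≤ k := by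
  simpa using (hcat U M).rank_le_card_height

lemma finrank_rowSpace_hcat_zero (M : Matrix (Fin k) (Fin n2) F) :
    Module.finrank F ↥(rowSpace (hcat (0 : Matrix (Fin k) (Fin n1) F) M)) = M.rank := by
  have hdec := finrank_decomp (proj2 F n1 n2) (rowSpace (hcat (0 : Matrix (Fin k) (Fin n1) F) M))
  have hmap := map_proj2_hcat (0 : Matrix (Fin k) (Fin n1) F) M
  have hbot : LinearMap.ker (proj2 F n1 n2) ⊓
      rowSpace (hcat (0 : Matrix (Fin k) (Fin n1) F) M) = ⊥ := by
    rw [eq_bot_iff]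
    rintro x ⟨hx2, hx⟩
    have hx1 := hcat_zero_le_ker M hx
    exact eq_zero_of_projs (LinearMap.mem_ker.mp hx1) (LinearMap.mem_ker.mp hx2)
  rw [hmap, hbot, finrank_bot, add_zero] at hdec
  rw [hdec, finrank_rowSpace]

lemma subspaceDist_comm {V : Type*} [AddCommGroup V] [Module F V] (U W : Submodule F V) :
    subspaceDist U W = subspaceDist W U := by
  unfold subspaceDist
  rw [sup_comm]
  omega

end Helpers

theorem statement2 (q k n1 n2 d N1 N2 NR : ℕ) (hq : IsPrimePow q)
    (F : Type) [Field F] [Fintype F] (hcard : Fintype.card F = q)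
    (hd0 : 0 < d) (hdeven : Even d) (hdk : d ≤ k) (hkn1 : k < n1) (hkn2 : k < n2)
    (𝒰1 : Set (Matrix (Fin k) (Fin n1) F))
    (hU1rank : ∀ U ∈ 𝒰1, U.rank = k)
    (hU1inj : ∀ U1 ∈ 𝒰1, ∀ U2 ∈ 𝒰1, U1 ≠ U2 → rowSpace U1 ≠ rowSpace U2)
    (hU1card : 𝒰1.ncard = N1)
    (hU1code : ∀ U1 ∈ 𝒰1, ∀ U2 ∈ 𝒰1, U1 ≠ U2 →
      d ≤ subspaceDist (rowSpace U1) (rowSpace U2))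
    (𝒰2 : Set (Matrix (Fin k) (Fin n2) F))
    (hU2rank : ∀ U ∈ 𝒰2, U.rank = k)
    (hU2inj : ∀ U1 ∈ 𝒰2, ∀ U2 ∈ 𝒰2, U1 ≠ U2 → rowSpace U1 ≠ rowSpace U2)
    (hU2card : 𝒰2.ncard = N2)
    (hU2code : ∀ U1 ∈ 𝒰2, ∀ U2 ∈ 𝒰2, U1 ≠ U2 →
      d ≤ subspaceDist (rowSpace U1) (rowSpace U2))
    (CR : Submodule F (Matrix (Fin k) (Fin n2) F))
    (hCRcard : Nat.card CR = NR)
    (hCRrank : ∀ M ∈ CR, M ≠ 0 → d / 2 ≤ M.rank)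
    (C3 : Set (Submodule F (Fin (n1 + n2) → F)))
    (hC3dim : ∀ Y ∈ C3, Module.finrank F ↥Y = k)
    (hC3dist : ∀ X ∈ C3, ∀ Y ∈ C3, X ≠ Y → d ≤ subspaceDist X Y)
    (hC3projLB : ∀ Y ∈ C3, d / 2 ≤ Module.finrank F ↥(Y.map (proj1 F n1 n2)))
    (hC3projUB : ∀ Y ∈ C3, Module.finrank F ↥(Y.map (proj1 F n1 n2)) ≤ k - d / 2) :
    let C1 : Set (Submodule F (Fin (n1 + n2) → F)) :=
      {X | ∃ U ∈ 𝒰1, ∃ M ∈ CR, X = rowSpace (hcat U M)}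
    let C2 : Set (Submodule F (Fin (n1 + n2) → F)) :=
      {X | ∃ U ∈ 𝒰2, X = rowSpace (hcat (0 : Matrix (Fin k) (Fin n1) F) U)}
    let C := C1 ∪ C2 ∪ C3
    C.ncard = N1 * NR + N2 + C3.ncard ∧
      (∀ X ∈ C, Module.finrank F ↥X = k) ∧
      (∀ X ∈ C, ∀ Y ∈ C, X ≠ Y → d ≤ subspaceDist X Y) := by
  intro C1 C2 C
  classical
  haveI : Finite (Submodule F (Fin (n1 + n2) → F)) :=
    Finite.of_injective (fun (p : Submodule F (Fin (n1 + n2) → F)) => (p : Set (Fin (n1 + n2) → F)))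
      SetLike.coe_injective
  obtain ⟨e, he⟩ := hdeven
  set p1 := proj1 F n1 n2 with hp1
  set p2 := proj2 F n1 n2 with hp2
  have hU1k : ∀ U ∈ 𝒰1, Module.finrank F ↥(rowSpace U) = k := fun U hU => by
    rw [finrank_rowSpace, hU1rank U hU]
  have hU2k : ∀ U ∈ 𝒰2, Module.finrank F ↥(rowSpace U) = k := fun U hU => by
    rw [finrank_rowSpace, hU2rank U hU]
  have hC1fact : ∀ U ∈ 𝒰1, ∀ M : Matrix (Fin k) (Fin n2) F,
      Module.finrank F ↥(rowSpace (hcat U M)) = k ∧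
      LinearMap.ker p1 ⊓ rowSpace (hcat U M) = ⊥ := by
    intro U hU M
    have hmap := map_proj1_hcat U M
    have hle : Module.finrank F ↥(rowSpace (hcat U M)) ≤ k := by
      rw [finrank_rowSpace]; exact rank_hcat_le U M
    have hdec := finrank_decomp p1 (rowSpace (hcat U M))
    rw [hmap, hU1k U hU] at hdec
    exact ⟨by omega, Submodule.finrank_eq_zero.mp (by omega)⟩
  have hC2dim : ∀ U ∈ 𝒰2,
      Module.finrank F ↥(rowSpace (hcat (0 : Matrix (Fin k) (Fin n1) F) U)) = k := by
    intro U hU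
    rw [finrank_rowSpace_hcat_zero, hU2rank U hU]
  -- sup bounds
  have hb11 : ∀ U1 ∈ 𝒰1, ∀ M1 ∈ CR, ∀ U2 ∈ 𝒰1, ∀ M2 ∈ CR, (U1 ≠ U2 ∨ M1 ≠ M2) →
      k + e ≤ Module.finrank F ↥(rowSpace (hcat U1 M1) ⊔ rowSpace (hcat U2 M2)) := by
    intro U1 h1 M1 hm1 U2 h2 M2 hm2 hne
    by_cases hU : U1 = U2
    · subst hU
      have hM : M1 ≠ M2 := hne.resolve_left (fun h => h rfl)
      have hmapW : (rowSpace (hcat U1 M1) ⊔ rowSpace (hcat U1 M2)).map p1 = rowSpace U1 := by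
        rw [Submodule.map_sup, map_proj1_hcat, map_proj1_hcat, sup_idem]
      have hx : ∀ i : Fin k, hcat (0 : Matrix (Fin k) (Fin n1) F) (M1 - M2) i =
          hcat U1 M1 i - hcat U1 M2 i := by
        intro i
        funext j
        refine Fin.addCases (fun i' => ?_) (fun i' => ?_) j <;>
          simp [hcat_apply, Fin.append_left, Fin.append_right, Matrix.sub_apply,
            Matrix.zero_apply, Pi.sub_apply, sub_self]
      have hΔ : rowSpace (hcat (0 : Matrix (Fin k) (Fin n1) F) (M1 - M2)) ≤
          LinearMap.ker p1 ⊓ (rowSpace (hcat U1 M1) ⊔ rowSpace (hcat U1 M2)) := by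
        refine le_inf (hcat_zero_le_ker _) ?_
        rw [rowSpace, Submodule.span_le, Set.range_subset_iff]
        intro i
        rw [SetLike.mem_coe]
        show hcat (0 : Matrix (Fin k) (Fin n1) F) (M1 - M2) i ∈
          rowSpace (hcat U1 M1) ⊔ rowSpace (hcat U1 M2)
        rw [hx i]
        exact sub_mem (Submodule.mem_sup_left (Submodule.subset_span ⟨i, rfl⟩))
          (Submodule.mem_sup_right (Submodule.subset_span ⟨i, rfl⟩))
      have h1' := hCRrank (M1 - M2) (sub_mem hm1 hm2) (sub_ne_zero.mpr hM)
      have h2' := Submodule.finrank_mono hΔ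
      rw [finrank_rowSpace_hcat_zero] at h2'
      have hdec := finrank_decomp p1 (rowSpace (hcat U1 M1) ⊔ rowSpace (hcat U1 M2))
      rw [hmapW, hU1k U1 h1] at hdec
      omega
    · have hcode := hU1code U1 h1 U2 h2 hU
      unfold subspaceDist at hcode
      rw [hU1k U1 h1, hU1k U2 h2] at hcode
      have hmle : Module.finrank F ↥(rowSpace U1 ⊔ rowSpace U2) ≤
          Module.finrank F ↥(rowSpace (hcat U1 M1) ⊔ rowSpace (hcat U2 M2)) := by
        have h := Submodule.finrank_map_le p1 (rowSpace (hcat U1 M1) ⊔ rowSpace (hcat U2 M2))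
        rwa [Submodule.map_sup, map_proj1_hcat, map_proj1_hcat] at h
      omega
  have hb22 : ∀ U1 ∈ 𝒰2, ∀ U2 ∈ 𝒰2, U1 ≠ U2 →
      k + e ≤ Module.finrank F ↥(rowSpace (hcat (0 : Matrix (Fin k) (Fin n1) F) U1) ⊔
        rowSpace (hcat (0 : Matrix (Fin k) (Fin n1) F) U2)) := by
    intro U1 h1 U2 h2 hne
    have hcode := hU2code U1 h1 U2 h2 hne
    unfold subspaceDist at hcode
    rw [hU2k U1 h1, hU2k U2 h2] at hcode
    have hmle : Module.finrank F ↥(rowSpace U1 ⊔ rowSpace U2) ≤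
        Module.finrank F ↥(rowSpace (hcat (0 : Matrix (Fin k) (Fin n1) F) U1) ⊔
          rowSpace (hcat (0 : Matrix (Fin k) (Fin n1) F) U2)) := by
      have h := Submodule.finrank_map_le p2 (rowSpace (hcat (0 : Matrix (Fin k) (Fin n1) F) U1) ⊔
        rowSpace (hcat (0 : Matrix (Fin k) (Fin n1) F) U2))
      rwa [Submodule.map_sup, map_proj2_hcat, map_proj2_hcat] at h
    omega
  have hb12 : ∀ U1 ∈ 𝒰1, ∀ M1 : Matrix (Fin k) (Fin n2) F, ∀ U2 ∈ 𝒰2,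
      k + e ≤ Module.finrank F ↥(rowSpace (hcat U1 M1) ⊔
        rowSpace (hcat (0 : Matrix (Fin k) (Fin n1) F) U2)) := by
    intro U1 h1 M1 U2 h2
    have hsi := Submodule.finrank_sup_add_finrank_inf_eq (rowSpace (hcat U1 M1))
      (rowSpace (hcat (0 : Matrix (Fin k) (Fin n1) F) U2))
    have hbot : rowSpace (hcat U1 M1) ⊓
        rowSpace (hcat (0 : Matrix (Fin k) (Fin n1) F) U2) = ⊥ := by
      rw [eq_bot_iff, ← (hC1fact U1 h1 M1).2]
      exact le_inf (le_trans inf_le_right (hcat_zero_le_ker U2)) inf_le_left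
    rw [hbot, finrank_bot, add_zero, (hC1fact U1 h1 M1).1, hC2dim U2 h2] at hsi
    omega
  have hb13 : ∀ U1 ∈ 𝒰1, ∀ M1 : Matrix (Fin k) (Fin n2) F, ∀ Y ∈ C3,
      k + e ≤ Module.finrank F ↥(rowSpace (hcat U1 M1) ⊔ Y) := by
    intro U1 h1 M1 Y hY
    have hsi := Submodule.finrank_sup_add_finrank_inf_eq (rowSpace (hcat U1 M1)) Y
    rw [(hC1fact U1 h1 M1).1, hC3dim Y hY] at hsi
    have hdec := finrank_decomp p1 (rowSpace (hcat U1 M1) ⊓ Y)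
    have hbot : LinearMap.ker p1 ⊓ (rowSpace (hcat U1 M1) ⊓ Y) = ⊥ := by
      rw [eq_bot_iff, ← (hC1fact U1 h1 M1).2]
      exact inf_le_inf_left _ inf_le_left
    have hm : Module.finrank F ↥((rowSpace (hcat U1 M1) ⊓ Y).map p1) ≤
        Module.finrank F ↥(Y.map p1) :=
      Submodule.finrank_mono (Submodule.map_mono inf_le_right)
    have hub := hC3projUB Y hY
    rw [hbot, finrank_bot, add_zero] at hdec
    omega
  have hb23 : ∀ U ∈ 𝒰2, ∀ Y ∈ C3,
      k + e ≤ Module.finrank F ↥(rowSpace (hcat (0 : Matrix (Fin k) (Fin n1) F) U) ⊔ Y) := by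
    intro U hU Y hY
    have hdec := finrank_decomp p1 (rowSpace (hcat (0 : Matrix (Fin k) (Fin n1) F) U) ⊔ Y)
    have hmap : (rowSpace (hcat (0 : Matrix (Fin k) (Fin n1) F) U) ⊔ Y).map p1 = Y.map p1 := by
      rw [Submodule.map_sup, map_proj1_hcat, rowSpace_zero, bot_sup_eq]
    have hk1 : Module.finrank F ↥(rowSpace (hcat (0 : Matrix (Fin k) (Fin n1) F) U)) ≤
        Module.finrank F ↥(LinearMap.ker p1 ⊓
          (rowSpace (hcat (0 : Matrix (Fin k) (Fin n1) F) U) ⊔ Y)) :=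
      Submodule.finrank_mono (le_inf (hcat_zero_le_ker U) le_sup_left)
    have hlb := hC3projLB Y hY
    rw [hmap] at hdec
    rw [hC2dim U hU] at hk1
    omega
  -- the projection invariant
  have hφ1 : ∀ U ∈ 𝒰1, ∀ M : Matrix (Fin k) (Fin n2) F,
      Module.finrank F ↥((rowSpace (hcat U M)).map p1) = k := by
    intro U hU M
    rw [map_proj1_hcat, hU1k U hU]
  have hφ2 : ∀ U : Matrix (Fin k) (Fin n2) F,
      (rowSpace (hcat (0 : Matrix (Fin k) (Fin n1) F) U)).map p1 = ⊥ := fun U => by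
    rw [map_proj1_hcat, rowSpace_zero]
  -- injectivity
  have hinj1 : ∀ U1 ∈ 𝒰1, ∀ M1 ∈ CR, ∀ U2 ∈ 𝒰1, ∀ M2 ∈ CR,
      rowSpace (hcat U1 M1) = rowSpace (hcat U2 M2) → U1 = U2 ∧ M1 = M2 := by
    intro U1 h1 M1 hm1 U2 h2 M2 hm2 heq
    have hUeq : U1 = U2 := by
      by_contra hne
      exact hU1inj U1 h1 U2 h2 hne
        (by rw [← map_proj1_hcat U1 M1, ← map_proj1_hcat U2 M2, heq])
    subst hUeq
    refine ⟨rfl, ?_⟩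
    by_contra hne
    have hb := hb11 U1 h1 M1 hm1 U1 h2 M2 hm2 (Or.inr hne)
    rw [heq, sup_idem, (hC1fact U1 h1 M2).1] at hb
    omega
  have hinj2 : ∀ U1 ∈ 𝒰2, ∀ U2 ∈ 𝒰2,
      rowSpace (hcat (0 : Matrix (Fin k) (Fin n1) F) U1) =
        rowSpace (hcat (0 : Matrix (Fin k) (Fin n1) F) U2) → U1 = U2 := by
    intro U1 h1 U2 h2 heq
    by_contra hne
    exact hU2inj U1 h1 U2 h2 hne
      (by rw [← map_proj2_hcat (0 : Matrix (Fin k) (Fin n1) F) U1,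
        ← map_proj2_hcat (0 : Matrix (Fin k) (Fin n1) F) U2, heq])
  -- disjointness
  have hnot12 : ∀ X ∈ C1, X ∉ C2 := by
    intro X hX hX2
    obtain ⟨U, hU, M, hM, rfl⟩ :
        ∃ U ∈ 𝒰1, ∃ M ∈ CR, X = rowSpace (hcat U M) := hX
    obtain ⟨U2, hU2', heq⟩ :
        ∃ U2 ∈ 𝒰2, rowSpace (hcat U M) =
          rowSpace (hcat (0 : Matrix (Fin k) (Fin n1) F) U2) := hX2
    have h1 := hφ1 U hU M
    rw [heq, hφ2 U2, finrank_bot] at h1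
    omega
  have hnot13 : ∀ X ∈ C1, X ∉ C3 := by
    intro X hX hX3
    obtain ⟨U, hU, M, hM, rfl⟩ :
        ∃ U ∈ 𝒰1, ∃ M ∈ CR, X = rowSpace (hcat U M) := hX
    have h1 := hφ1 U hU M
    have h2 := hC3projUB _ hX3
    rw [h1] at h2
    omega
  have hnot23 : ∀ X ∈ C2, X ∉ C3 := by
    intro X hX hX3
    obtain ⟨U, hU, rfl⟩ :
        ∃ U ∈ 𝒰2, X = rowSpace (hcat (0 : Matrix (Fin k) (Fin n1) F) U) := hX
    have h2 := hC3projLB _ hX3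
    rw [hφ2 U, finrank_bot] at h2
    omega
  -- cardinalities
  have hC1eq : C1 = (fun p : Matrix (Fin k) (Fin n1) F × Matrix (Fin k) (Fin n2) F =>
      rowSpace (hcat p.1 p.2)) '' (𝒰1 ×ˢ (CR : Set (Matrix (Fin k) (Fin n2) F))) := by
    ext X
    constructor
    · intro hX
      obtain ⟨U, hU, M, hM, rfl⟩ :
          ∃ U ∈ 𝒰1, ∃ M ∈ CR, X = rowSpace (hcat U M) := hX
      exact ⟨(U, M), ⟨hU, hM⟩, rfl⟩
    · rintro ⟨⟨U, M⟩, ⟨hU, hM⟩, rfl⟩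
      exact ⟨U, hU, M, hM, rfl⟩
  have hinjOn : Set.InjOn (fun p : Matrix (Fin k) (Fin n1) F × Matrix (Fin k) (Fin n2) F =>
      rowSpace (hcat p.1 p.2)) (𝒰1 ×ˢ (CR : Set (Matrix (Fin k) (Fin n2) F))) := by
    rintro ⟨U1, M1⟩ hp ⟨U2, M2⟩ hq heq
    obtain ⟨hu, hm⟩ := hinj1 U1 hp.1 M1 hp.2 U2 hq.1 M2 hq.2 heq
    rw [Prod.mk.injEq]
    exact ⟨hu, hm⟩
  have hC1card : C1.ncard = N1 * NR := by
    rw [hC1eq, Set.ncard_image_of_injOn hinjOn, ← Nat.card_coe_set_eq,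
      Nat.card_congr (Equiv.Set.prod _ _), Nat.card_prod, Nat.card_coe_set_eq, hU1card]
    exact congrArg (fun t => N1 * t) hCRcard
  have hC2eq : C2 = (fun U => rowSpace (hcat (0 : Matrix (Fin k) (Fin n1) F) U)) '' 𝒰2 := by
    ext X
    constructor
    · intro hX
      obtain ⟨U, hU, rfl⟩ :
          ∃ U ∈ 𝒰2, X = rowSpace (hcat (0 : Matrix (Fin k) (Fin n1) F) U) := hX
      exact ⟨U, hU, rfl⟩
    · rintro ⟨U, hU, rfl⟩
      exact ⟨U, hU, rfl⟩
  have hC2card : C2.ncard = N2 := by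
    rw [hC2eq, Set.ncard_image_of_injOn (fun U1 h1 U2 h2 heq => hinj2 U1 h1 U2 h2 heq), hU2card]
  have hd12 : Disjoint C1 C2 := Set.disjoint_left.mpr hnot12
  have hd13 : Disjoint (C1 ∪ C2) C3 := by
    rw [Set.disjoint_union_left]
    exact ⟨Set.disjoint_left.mpr hnot13, Set.disjoint_left.mpr hnot23⟩
  have hcardC : C.ncard = N1 * NR + N2 + C3.ncard := by
    show ((C1 ∪ C2) ∪ C3).ncard = _
    rw [Set.ncard_union_eq hd13 (Set.toFinite _) (Set.toFinite _),
      Set.ncard_union_eq hd12 (Set.toFinite _) (Set.toFinite _), hC1card, hC2card]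
  -- dimensions
  have hdim : ∀ X ∈ C, Module.finrank F ↥X = k := by
    intro X hX
    have hX' : X ∈ C1 ∪ C2 ∪ C3 := hX
    simp only [Set.mem_union] at hX'
    rcases hX' with (hX1 | hX2) | hX3
    · obtain ⟨U, hU, M, hM, rfl⟩ :
          ∃ U ∈ 𝒰1, ∃ M ∈ CR, X = rowSpace (hcat U M) := hX1
      exact (hC1fact U hU M).1
    · obtain ⟨U, hU, rfl⟩ :
          ∃ U ∈ 𝒰2, X = rowSpace (hcat (0 : Matrix (Fin k) (Fin n1) F) U) := hX2
      exact hC2dim U hU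
    · exact hC3dim X hX3
  -- distances
  have hdistgen : ∀ X Y : Submodule F (Fin (n1 + n2) → F), Module.finrank F ↥X = k →
      Module.finrank F ↥Y = k → k + e ≤ Module.finrank F ↥(X ⊔ Y) → d ≤ subspaceDist X Y := by
    intro X Y hX hY h
    unfold subspaceDist
    rw [hX, hY]
    omega
  have hdist : ∀ X ∈ C, ∀ Y ∈ C, X ≠ Y → d ≤ subspaceDist X Y := by
    intro X hX Y hY hne
    have hX' : X ∈ C1 ∪ C2 ∪ C3 := hX
    have hY' : Y ∈ C1 ∪ C2 ∪ C3 := hY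
    simp only [Set.mem_union] at hX' hY'
    have hdXk := hdim X hX
    have hdYk := hdim Y hY
    rcases hX' with (hX1 | hX2) | hX3 <;> rcases hY' with (hY1 | hY2) | hY3
    · -- C1 C1
      obtain ⟨U1, hU1', M1, hM1, rfl⟩ :
          ∃ U ∈ 𝒰1, ∃ M ∈ CR, X = rowSpace (hcat U M) := hX1
      obtain ⟨U2, hU2', M2, hM2, rfl⟩ :
          ∃ U ∈ 𝒰1, ∃ M ∈ CR, Y = rowSpace (hcat U M) := hY1
      have hor : U1 ≠ U2 ∨ M1 ≠ M2 := by
        by_contra h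
        push_neg at h
        exact hne (by rw [h.1, h.2])
      exact hdistgen _ _ hdXk hdYk (hb11 U1 hU1' M1 hM1 U2 hU2' M2 hM2 hor)
    · -- C1 C2
      obtain ⟨U1, hU1', M1, hM1, rfl⟩ :
          ∃ U ∈ 𝒰1, ∃ M ∈ CR, X = rowSpace (hcat U M) := hX1
      obtain ⟨U2, hU2', rfl⟩ :
          ∃ U ∈ 𝒰2, Y = rowSpace (hcat (0 : Matrix (Fin k) (Fin n1) F) U) := hY2
      exact hdistgen _ _ hdXk hdYk (hb12 U1 hU1' M1 U2 hU2')
    · -- C1 C3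
      obtain ⟨U1, hU1', M1, hM1, rfl⟩ :
          ∃ U ∈ 𝒰1, ∃ M ∈ CR, X = rowSpace (hcat U M) := hX1
      exact hdistgen _ _ hdXk hdYk (hb13 U1 hU1' M1 Y hY3)
    · -- C2 C1
      rw [subspaceDist_comm]
      obtain ⟨U2, hU2', rfl⟩ :
          ∃ U ∈ 𝒰2, X = rowSpace (hcat (0 : Matrix (Fin k) (Fin n1) F) U) := hX2
      obtain ⟨U1, hU1', M1, hM1, rfl⟩ :
          ∃ U ∈ 𝒰1, ∃ M ∈ CR, Y = rowSpace (hcat U M) := hY1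
      exact hdistgen _ _ hdYk hdXk (hb12 U1 hU1' M1 U2 hU2')
    · -- C2 C2
      obtain ⟨U1, hU1', rfl⟩ :
          ∃ U ∈ 𝒰2, X = rowSpace (hcat (0 : Matrix (Fin k) (Fin n1) F) U) := hX2
      obtain ⟨U2, hU2', rfl⟩ :
          ∃ U ∈ 𝒰2, Y = rowSpace (hcat (0 : Matrix (Fin k) (Fin n1) F) U) := hY2
      have hU12 : U1 ≠ U2 := fun h => hne (by rw [h])
      exact hdistgen _ _ hdXk hdYk (hb22 U1 hU1' U2 hU2' hU12)
    · -- C2 C3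
      obtain ⟨U2, hU2', rfl⟩ :
          ∃ U ∈ 𝒰2, X = rowSpace (hcat (0 : Matrix (Fin k) (Fin n1) F) U) := hX2
      exact hdistgen _ _ hdXk hdYk (hb23 U2 hU2' Y hY3)
    · -- C3 C1
      rw [subspaceDist_comm]
      obtain ⟨U1, hU1', M1, hM1, rfl⟩ :
          ∃ U ∈ 𝒰1, ∃ M ∈ CR, Y = rowSpace (hcat U M) := hY1
      exact hdistgen _ _ hdYk hdXk (hb13 U1 hU1' M1 X hX3)
    · -- C3 C2
      rw [subspaceDist_comm]
      obtain ⟨U2, hU2', rfl⟩ :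
          ∃ U ∈ 𝒰2, Y = rowSpace (hcat (0 : Matrix (Fin k) (Fin n1) F) U) := hY2
      exact hdistgen _ _ hdYk hdXk (hb23 U2 hU2' X hX3)
    · -- C3 C3
      exact hC3dist X hX3 Y hY3 hne
  exact ⟨hcardC, hdim, hdist⟩
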